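/- arXiv:2310.11334 — 5 statements merged into one kernel-verified Lean document; each statement's English description precedes it below -/
import Mathlib

section
/- Let S be a finite nonempty linearly ordered set, U uniformly distributed on [0,1], and g₁, ..., g_k : [0,1] → S monotone nondecreasing measurable functions (k ≥ 1). Then for any x₁, ..., x_k ∈ S, P(g₁(U) = x₁ ∧ ... ∧ g_k(U) = x_k) = max(0, min_{i} P(g_i(U) ≤ x_i) − max_{i} P(g_i(U) < x_i)). -/
/-!
For a monotone `g` on `I = [0, 1]`, the sets `{u ∈ I | g u ≤ x}` and `{u ∈ I | g u < x}` are initial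
segments of `I`, so all `2k` events of the theorem form a chain under inclusion. The joint event is
the smallest `≤`-segment minus the largest `<`-segment, and for nested sets the measure of a
difference is the difference of the measures (truncated at `0` in `ℝ≥0∞`).
-/

open MeasureTheory Set

section Chain

variable {α ι : Type*} [Finite ι] [Nonempty ι]

theorem exists_forall_subset_of_total {A : ι → Set α} (hA : ∀ i j, A i ⊆ A j ∨ A j ⊆ A i) :
    ∃ j, ∀ i, A j ⊆ A i :=
  Directed.finite_le (r := fun s t : Set α => t ⊆ s) (f := A)
    (fun i j => (hA i j).elim (fun h => ⟨i, subset_rfl, h⟩) (fun h => ⟨j, h, subset_rfl⟩)) id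

theorem exists_forall_supset_of_total {A : ι → Set α} (hA : ∀ i j, A i ⊆ A j ∨ A j ⊆ A i) :
    ∃ j, ∀ i, A i ⊆ A j :=
  Directed.finite_le (r := (· ⊆ ·)) (f := A)
    (fun i j => (hA i j).elim (fun h => ⟨j, h, subset_rfl⟩) (fun h => ⟨i, subset_rfl, h⟩)) id

end Chain

section Measure

variable {α : Type*} [MeasurableSpace α] {μ : Measure α}

theorem measure_sdiff_of_total {s t : Set α} (hst : s ⊆ t ∨ t ⊆ s) (ht : NullMeasurableSet t μ)
    (ht_fin : μ t ≠ ⊤) : μ (s \ t) = μ s - μ t := by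
  rw [measure_sdiff' s ht ht_fin]
  rcases hst with h | h
  · rw [union_eq_right.2 h, tsub_self, tsub_eq_zero_of_le (measure_mono h)]
  · rw [union_eq_left.2 h]

theorem measure_iInter_sdiff_iUnion_of_total {ι : Type*} [Finite ι] [Nonempty ι] {A B : ι → Set α}
    (hA : ∀ i j, A i ⊆ A j ∨ A j ⊆ A i) (hB : ∀ i j, B i ⊆ B j ∨ B j ⊆ B i)
    (hAB : ∀ i j, A i ⊆ B j ∨ B j ⊆ A i) (hB_meas : ∀ i, NullMeasurableSet (B i) μ)
    (hB_fin : ∀ i, μ (B i) ≠ ⊤) :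
    μ ((⋂ i, A i) \ ⋃ i, B i) = (⨅ i, μ (A i)) - ⨆ i, μ (B i) := by
  obtain ⟨j₀, hj₀⟩ := exists_forall_subset_of_total hA
  obtain ⟨j₁, hj₁⟩ := exists_forall_supset_of_total hB
  have hinter : ⋂ i, A i = A j₀ := (iInter_subset _ j₀).antisymm (subset_iInter hj₀)
  have hunion : ⋃ i, B i = B j₁ := (iUnion_subset hj₁).antisymm (subset_iUnion _ j₁)
  have hinf : ⨅ i, μ (A i) = μ (A j₀) :=
    (iInf_le _ j₀).antisymm (le_iInf fun i => measure_mono (hj₀ i))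
  have hsup : ⨆ i, μ (B i) = μ (B j₁) :=
    (iSup_le fun i => measure_mono (hj₁ i)).antisymm (le_iSup (fun i => μ (B i)) j₁)
  rw [hinter, hunion, hinf, hsup, measure_sdiff_of_total (hAB j₀ j₁) (hB_meas j₁) (hB_fin j₁)]

end Measure

section MonotoneOn

variable {α β : Type*} [LinearOrder α] [Preorder β] {I : Set α} {f g : α → β} {s t : Set β}

theorem MonotoneOn.inter_preimage_total (hf : MonotoneOn f I) (hg : MonotoneOn g I)
    (hs : IsLowerSet s) (ht : IsLowerSet t) :
    I ∩ f ⁻¹' s ⊆ I ∩ g ⁻¹' t ∨ I ∩ g ⁻¹' t ⊆ I ∩ f ⁻¹' s := by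
  have hs' := hs.preimage (monotoneOn_iff_monotone.1 hf)
  have ht' := ht.preimage (monotoneOn_iff_monotone.1 hg)
  simpa only [← Subtype.image_preimage_coe, preimage_preimage] using
    (hs'.total ht').imp (image_mono (f := ((↑) : I → α))) (image_mono (f := ((↑) : I → α)))

theorem MonotoneOn.ordConnected_inter_preimage (hf : MonotoneOn f I) (hI : I.OrdConnected)
    (hs : IsLowerSet s) : (I ∩ f ⁻¹' s).OrdConnected :=
  ⟨fun _ hu _ hv w hw =>
    have hwI : w ∈ I := hI.out hu.1 hv.1 hw
    ⟨hwI, hs (hf hwI hv.1 hw.2) hv.2⟩⟩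

end MonotoneOn

theorem stmt_4_general (S : Type*) [LinearOrder S] (k : ℕ) (hk : 0 < k) (g : Fin k → ℝ → S)
    (hg : ∀ i, MonotoneOn (g i) (Icc (0:ℝ) 1)) (x : Fin k → S) :
    (volume.restrict (Icc (0:ℝ) 1)) {u | ∀ i, g i u = x i} =
      (⨅ i, (volume.restrict (Icc (0:ℝ) 1)) {u | g i u ≤ x i})
        - (⨆ i, (volume.restrict (Icc (0:ℝ) 1)) {u | g i u < x i}) := by
  have : Nonempty (Fin k) := ⟨⟨0, hk⟩⟩
  set I := Icc (0:ℝ) 1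
  have hrestrict (t : Set ℝ) : volume.restrict I t = volume (I ∩ t) := by
    rw [Measure.restrict_apply' measurableSet_Icc, inter_comm]
  have hevent : I ∩ {u | ∀ i, g i u = x i} =
      (⋂ i, I ∩ g i ⁻¹' Iic (x i)) \ ⋃ i, I ∩ g i ⁻¹' Iio (x i) := by
    ext u
    simp only [mem_inter_iff, mem_ofPred_eq, mem_sdiff, mem_iInter, mem_iUnion, mem_preimage,
      mem_Iic, mem_Iio, not_exists, not_and, not_lt, forall_and, le_antisymm_iff, forall_const]
    tauto
  simp only [hrestrict]
  rw [hevent]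
  exact measure_iInter_sdiff_iUnion_of_total
    (fun i j => (hg i).inter_preimage_total (hg j) (isLowerSet_Iic _) (isLowerSet_Iic _))
    (fun i j => (hg i).inter_preimage_total (hg j) (isLowerSet_Iio _) (isLowerSet_Iio _))
    (fun i j => (hg i).inter_preimage_total (hg j) (isLowerSet_Iic _) (isLowerSet_Iio _))
    (fun i => ((hg i).ordConnected_inter_preimage ordConnected_Icc
      (isLowerSet_Iio _)).measurableSet.nullMeasurableSet)
    (fun i => ne_top_of_le_ne_top measure_Icc_lt_top.ne (measure_mono inter_subset_left))

theorem stmt_4 (S : Type*) [Fintype S] [Nonempty S] [LinearOrder S]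
    [MeasurableSpace S] (k : ℕ) (hk : 0 < k) (g : Fin k → ℝ → S)
    (hg : ∀ i, MonotoneOn (g i) (Icc (0:ℝ) 1))
    (hgm : ∀ i, Measurable (g i)) (x : Fin k → S) :
    (volume.restrict (Icc (0:ℝ) 1)) {u | ∀ i, g i u = x i} =
      (⨅ i, (volume.restrict (Icc (0:ℝ) 1)) {u | g i u ≤ x i})
        - (⨆ i, (volume.restrict (Icc (0:ℝ) 1)) {u | g i u < x i}) :=
  stmt_4_general S k hk g hg x
end

section
/- Let S be a finite nonempty linearly ordered set, U uniform on [0,1], and g : [0,1] → S monotone nondecreasing and measurable. Let q(u) = min{v ∈ S : P(g(U) ≤ v) ≥ u} be the quantile function of the law of g(U). Then g(u) = q(u) for Lebesgue-almost-every u ∈ (0,1]. -/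
open MeasureTheory Set

theorem stmt_8 (S : Type*) [Fintype S] [Nonempty S] [LinearOrder S]
    [MeasurableSpace S] (g : ℝ → S)
    (hg : MonotoneOn g (Icc (0:ℝ) 1)) (hgm : Measurable g)
    (F : S → ℝ)
    (hF : ∀ v, F v = ((volume.restrict (Icc (0:ℝ) 1)) {u | g u ≤ v}).toReal)
    (q : ℝ → S)
    (hq : ∀ u ∈ Ioc (0:ℝ) 1, IsLeast {v : S | u ≤ F v} (q u)) :
    ∀ᵐ u ∂(volume.restrict (Ioc (0:ℝ) 1)), g u = q u := by
  have key : ∀ u ∈ Ioc (0:ℝ) 1, g u ≠ q u → ∃ v : S, u = F v := by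
    intro u hu hne
    have hu' : u ∈ Icc (0:ℝ) 1 := ⟨hu.1.le, hu.2⟩
    have hql := hq u hu
    -- u ≤ F (g u)
    have hFg : u ≤ F (g u) := by
      rw [hF, Measure.restrict_apply' measurableSet_Icc]
      have hsub : Icc (0:ℝ) u ⊆ {t | g t ≤ g u} ∩ Icc 0 1 := by
        intro t ht
        have ht1 : t ∈ Icc (0:ℝ) 1 := ⟨ht.1, ht.2.trans hu.2⟩
        exact ⟨hg ht1 hu' ht.2, ht1⟩
      have h1 : ENNReal.ofReal u ≤ volume ({t | g t ≤ g u} ∩ Icc 0 1) := by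
        calc ENNReal.ofReal u = volume (Icc (0:ℝ) u) := by
              rw [Real.volume_Icc, sub_zero]
          _ ≤ _ := measure_mono hsub
      have h2 : volume ({t | g t ≤ g u} ∩ Icc (0:ℝ) 1) ≤ volume (Icc (0:ℝ) 1) :=
        measure_mono inter_subset_right
      have hfin : volume ({t | g t ≤ g u} ∩ Icc (0:ℝ) 1) ≠ ⊤ :=
        ne_top_of_le_ne_top (by simp [Real.volume_Icc]) h2
      have := ENNReal.toReal_mono hfin h1
      rwa [ENNReal.toReal_ofReal hu.1.le] at this
    have hqg : q u ≤ g u := hql.2 hFg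
    have hlt : q u < g u := lt_of_le_of_ne hqg (Ne.symm hne)
    refine ⟨q u, le_antisymm hql.1 ?_⟩
    -- F (q u) ≤ u
    rw [hF, Measure.restrict_apply' measurableSet_Icc]
    have hsub : {t | g t ≤ q u} ∩ Icc (0:ℝ) 1 ⊆ Ico 0 u := by
      rintro t ⟨hgt, ht⟩
      refine ⟨ht.1, ?_⟩
      by_contra h
      push_neg at h
      exact absurd (le_trans (hg hu' ht h) hgt) (not_le.2 hlt)
    have h1 : volume ({t | g t ≤ q u} ∩ Icc (0:ℝ) 1) ≤ ENNReal.ofReal u := by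
      calc volume ({t | g t ≤ q u} ∩ Icc (0:ℝ) 1) ≤ volume (Ico (0:ℝ) u) :=
            measure_mono hsub
        _ = ENNReal.ofReal u := by rw [Real.volume_Ico, sub_zero]
    have := ENNReal.toReal_mono (by simp) h1
    rwa [ENNReal.toReal_ofReal hu.1.le] at this
  rw [ae_iff, Measure.restrict_apply' measurableSet_Ioc]
  refine measure_mono_null (t := ⋃ v : S, {F v}) ?_ ?_
  · rintro u ⟨hne, hu⟩
    obtain ⟨v, hv⟩ := key u hu hne
    exact mem_iUnion.2 ⟨v, hv⟩
  · exact measure_iUnion_null fun v => measure_singleton _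
end

section
/- There exists a function f : {0,1} × [0,1] → {0,1} such that f(1, u) ≥ f(0, u) for all u ∈ [0,1] (Pearl monotonicity of the output in the input), yet there is no linear order on {0,1} with respect to which both u ↦ f(0, u) and u ↦ f(1, u) are monotone nondecreasing functions of u (with [0,1] carrying its standard order). Concretely, f(0, u) = 0 for all u and f(1, u) = 1 if 1/3 ≤ u ≤ 2/3 and 0 otherwise is such a function. -/
/-! For `u ↦ f(1, u)` to be monotone, the values `0, 1, 0` taken at `u = 0, 1/2, 1` would force
`0 ≤' 1` and `1 ≤' 0`, contradicting antisymmetry of `≤'`; Pearl monotonicity holds because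
`f(0, ·) ≡ 0` is the least value. -/

open Set

theorem not_monotoneOn_rel_of_rise_and_fall {α β : Type*} [Preorder α] {r : β → β → Prop}
    [Std.Antisymm r] {s : Set α} {g : α → β} {x y z : α} (hx : x ∈ s) (hy : y ∈ s) (hz : z ∈ s)
    (hxy : x ≤ y) (hyz : y ≤ z) (hxz : g x = g z) (hne : g x ≠ g y) :
    ¬ ∀ u₁ ∈ s, ∀ u₂ ∈ s, u₁ ≤ u₂ → r (g u₁) (g u₂) := by
  intro hmono
  have hrise : r (g x) (g y) := hmono x hx y hy hxy
  have hfall : r (g y) (g x) := hxz ▸ hmono y hy z hz hyz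
  exact hne (antisymm hrise hfall)

theorem stmt_11 :
    ∃ f : Fin 2 → ℝ → Fin 2,
      (f = fun x u => if x = 1 ∧ (1/3 : ℝ) ≤ u ∧ u ≤ 2/3 then 1 else 0) ∧
      (∀ u ∈ Icc (0:ℝ) 1, f 0 u ≤ f 1 u) ∧
      (∀ le : Fin 2 → Fin 2 → Prop, IsLinearOrder (Fin 2) le →
        ¬ ((∀ u₁ ∈ Icc (0:ℝ) 1, ∀ u₂ ∈ Icc (0:ℝ) 1, u₁ ≤ u₂ → le (f 0 u₁) (f 0 u₂)) ∧
           (∀ u₁ ∈ Icc (0:ℝ) 1, ∀ u₂ ∈ Icc (0:ℝ) 1, u₁ ≤ u₂ → le (f 1 u₁) (f 1 u₂)))) := by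
  refine ⟨_, rfl, fun u _ => by simp, fun le _ ⟨_, hmono⟩ => ?_⟩
  refine not_monotoneOn_rel_of_rise_and_fall (x := 0) (y := 1/2) (z := 1)
    ?_ ?_ ?_ ?_ ?_ ?_ ?_ hmono <;> norm_num
end

section
/- Let S be a finite nonempty linearly ordered set, U uniform on [0,1], and g₁, g₂ : [0,1] → S monotone nondecreasing and measurable. For x₁, x₂ ∈ S with P(g₁(U) = x₁) > 0, the conditional probability P(g₂(U) = x₂ | g₁(U) = x₁) equals max(0, min(P(g₂(U) ≤ x₂), P(g₁(U) ≤ x₁)) − max(P(g₂(U) < x₂), P(g₁(U) < x₁))) / P(g₁(U) = x₁). -/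
open MeasureTheory Set

lemma ds_total {I D₁ D₂ : Set ℝ} (h₁I : D₁ ⊆ I)
    (h₁ : ∀ u ∈ D₁, ∀ v ∈ I, v ≤ u → v ∈ D₁) (h₂I : D₂ ⊆ I)
    (h₂ : ∀ u ∈ D₂, ∀ v ∈ I, v ≤ u → v ∈ D₂) : D₁ ⊆ D₂ ∨ D₂ ⊆ D₁ := by
  by_contra hc
  rcases not_or.mp hc with ⟨hc1, hc2⟩
  obtain ⟨u, hu, hu2⟩ := not_subset.mp hc1
  obtain ⟨v, hv, hv2⟩ := not_subset.mp hc2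
  rcases le_total u v with h | h
  · exact hu2 (h₂ v hv u (h₁I hu) h)
  · exact hv2 (h₁ u hu v (h₂I hv) h)

lemma ds_ordConnected {D : Set ℝ} (hDI : D ⊆ Icc (0:ℝ) 1)
    (h : ∀ u ∈ D, ∀ v ∈ Icc (0:ℝ) 1, v ≤ u → v ∈ D) : D.OrdConnected := by
  constructor
  intro u hu v hv w hw
  exact h v hv w ⟨(hDI hu).1.trans hw.1, hw.2.trans (hDI hv).2⟩ hw.2

theorem stmt_12 (S : Type*) [Fintype S] [Nonempty S] [LinearOrder S]
    [MeasurableSpace S] (g₁ g₂ : ℝ → S)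
    (hg₁ : MonotoneOn g₁ (Icc (0:ℝ) 1)) (hg₂ : MonotoneOn g₂ (Icc (0:ℝ) 1))
    (hm₁ : Measurable g₁) (hm₂ : Measurable g₂) (x₁ x₂ : S)
    (hpos : (volume.restrict (Icc (0:ℝ) 1)) {u | g₁ u = x₁} ≠ 0) :
    (volume.restrict (Icc (0:ℝ) 1)) {u | g₂ u = x₂ ∧ g₁ u = x₁}
        / (volume.restrict (Icc (0:ℝ) 1)) {u | g₁ u = x₁} =
      (min ((volume.restrict (Icc (0:ℝ) 1)) {u | g₂ u ≤ x₂})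
           ((volume.restrict (Icc (0:ℝ) 1)) {u | g₁ u ≤ x₁})
        - max ((volume.restrict (Icc (0:ℝ) 1)) {u | g₂ u < x₂})
              ((volume.restrict (Icc (0:ℝ) 1)) {u | g₁ u < x₁}))
        / (volume.restrict (Icc (0:ℝ) 1)) {u | g₁ u = x₁} := by
  have hres : ∀ s : Set ℝ,
      (volume.restrict (Icc (0:ℝ) 1)) s = volume (s ∩ Icc (0:ℝ) 1) :=
    fun s => Measure.restrict_apply' measurableSet_Icc
  set I : Set ℝ := Icc (0:ℝ) 1 with hIdef
  set A₂ : Set ℝ := {u | g₂ u ≤ x₂} ∩ I with hA₂def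
  set A₁ : Set ℝ := {u | g₁ u ≤ x₁} ∩ I with hA₁def
  set B₂ : Set ℝ := {u | g₂ u < x₂} ∩ I with hB₂def
  set B₁ : Set ℝ := {u | g₁ u < x₁} ∩ I with hB₁def
  -- downset properties
  have hA₂d : ∀ u ∈ A₂, ∀ v ∈ I, v ≤ u → v ∈ A₂ := by
    rintro u ⟨hu, huI⟩ v hvI hvu
    exact ⟨(hg₂ hvI huI hvu).trans hu, hvI⟩
  have hA₁d : ∀ u ∈ A₁, ∀ v ∈ I, v ≤ u → v ∈ A₁ := by
    rintro u ⟨hu, huI⟩ v hvI hvu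
    exact ⟨(hg₁ hvI huI hvu).trans hu, hvI⟩
  have hB₂d : ∀ u ∈ B₂, ∀ v ∈ I, v ≤ u → v ∈ B₂ := by
    rintro u ⟨hu, huI⟩ v hvI hvu
    exact ⟨lt_of_le_of_lt (hg₂ hvI huI hvu) hu, hvI⟩
  have hB₁d : ∀ u ∈ B₁, ∀ v ∈ I, v ≤ u → v ∈ B₁ := by
    rintro u ⟨hu, huI⟩ v hvI hvu
    exact ⟨lt_of_le_of_lt (hg₁ hvI huI hvu) hu, hvI⟩
  have hA₂I : A₂ ⊆ I := inter_subset_right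
  have hA₁I : A₁ ⊆ I := inter_subset_right
  have hB₂I : B₂ ⊆ I := inter_subset_right
  have hB₁I : B₁ ⊆ I := inter_subset_right
  -- the key set identity
  have hE : {u | g₂ u = x₂ ∧ g₁ u = x₁} ∩ I = (A₂ ∩ A₁) \ (B₂ ∪ B₁) := by
    ext u
    simp only [hA₂def, hA₁def, hB₂def, hB₁def, mem_inter_iff, mem_diff,
      mem_union, mem_setOf_eq, not_or, not_and]
    constructor
    · rintro ⟨⟨h2, h1⟩, hI⟩
      exact ⟨⟨⟨h2.le, hI⟩, ⟨h1.le, hI⟩⟩, fun h _ => absurd h2 h.ne,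
        fun h _ => absurd h1 h.ne⟩
    · rintro ⟨⟨⟨h2, hI⟩, ⟨h1, _⟩⟩, hn2, hn1⟩
      exact ⟨⟨h2.eq_of_not_lt (fun h => hn2 h hI),
        h1.eq_of_not_lt (fun h => hn1 h hI)⟩, hI⟩
  -- min and max
  have hmin : volume (A₂ ∩ A₁) = min (volume A₂) (volume A₁) := by
    rcases ds_total hA₂I hA₂d hA₁I hA₁d with h | h
    · rw [inter_eq_self_of_subset_left h, min_eq_left (measure_mono h)]
    · rw [inter_eq_self_of_subset_right h, min_eq_right (measure_mono h)]
  have hmax : volume (B₂ ∪ B₁) = max (volume B₂) (volume B₁) := by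
    rcases ds_total hB₂I hB₂d hB₁I hB₁d with h | h
    · rw [union_eq_self_of_subset_left h, max_eq_right (measure_mono h)]
    · rw [union_eq_self_of_subset_right h, max_eq_left (measure_mono h)]
  -- measurability of B₂ ∪ B₁
  have hB₂m : MeasurableSet B₂ := (ds_ordConnected hB₂I hB₂d).measurableSet
  have hB₁m : MeasurableSet B₁ := (ds_ordConnected hB₁I hB₁d).measurableSet
  have hBfin : volume (B₂ ∪ B₁) ≠ ⊤ := by
    refine ne_top_of_le_ne_top ?_ (measure_mono (union_subset hB₂I hB₁I))
    simp [hIdef]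
  -- downset property of union and intersection
  have hAId : ∀ u ∈ A₂ ∩ A₁, ∀ v ∈ I, v ≤ u → v ∈ A₂ ∩ A₁ := by
    rintro u ⟨h2, h1⟩ v hvI hvu
    exact ⟨hA₂d u h2 v hvI hvu, hA₁d u h1 v hvI hvu⟩
  have hBUd : ∀ u ∈ B₂ ∪ B₁, ∀ v ∈ I, v ≤ u → v ∈ B₂ ∪ B₁ := by
    rintro u (h2 | h1) v hvI hvu
    · exact Or.inl (hB₂d u h2 v hvI hvu)
    · exact Or.inr (hB₁d u h1 v hvI hvu)
  have key : volume ({u | g₂ u = x₂ ∧ g₁ u = x₁} ∩ I)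
      = volume (A₂ ∩ A₁) - volume (B₂ ∪ B₁) := by
    rcases ds_total (union_subset hB₂I hB₁I) hBUd
      (inter_subset_left.trans hA₂I) hAId with h | h
    · rw [hE, measure_diff h (hB₂m.union hB₁m).nullMeasurableSet hBfin]
    · rw [hE, diff_eq_empty.mpr h, measure_empty]
      exact (tsub_eq_zero_of_le (measure_mono h)).symm
  congr 1
  rw [hres, hres, hres, hres, hres, key, hmin, hmax]
end

section
/- Let S be a finite nonempty linearly ordered set, U uniform on [0,1], and g₁, ..., g_k : [0,1] → S monotone nondecreasing measurable functions. Then for x₁, ..., x_k ∈ S, the joint probability P(g₁(U) = x₁, ..., g_k(U) = x_k) is strictly positive if and only if min_i P(g_i(U) ≤ x_i) > max_i P(g_i(U) < x_i). -/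
open MeasureTheory Set

theorem stmt_13 (S : Type*) [Fintype S] [Nonempty S] [LinearOrder S]
    [MeasurableSpace S] (k : ℕ) (hk : 0 < k) (g : Fin k → ℝ → S)
    (hg : ∀ i, MonotoneOn (g i) (Icc (0:ℝ) 1))
    (hgm : ∀ i, Measurable (g i)) (x : Fin k → S) :
    0 < (volume.restrict (Icc (0:ℝ) 1)) {u | ∀ i, g i u = x i} ↔
      (⨆ i, (volume.restrict (Icc (0:ℝ) 1)) {u | g i u < x i})
        < (⨅ i, (volume.restrict (Icc (0:ℝ) 1)) {u | g i u ≤ x i}) := by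
  have : Nonempty (Fin k) := ⟨⟨0, hk⟩⟩
  set A : Fin k → Set ℝ := fun i => {u | g i u ≤ x i} ∩ Icc (0:ℝ) 1 with hA
  set B : Fin k → Set ℝ := fun i => {u | g i u < x i} ∩ Icc (0:ℝ) 1 with hB
  set E : Set ℝ := {u | ∀ i, g i u = x i} ∩ Icc (0:ℝ) 1 with hE
  have hrw : ∀ t : Set ℝ, (volume.restrict (Icc (0:ℝ) 1)) t = volume (t ∩ Icc (0:ℝ) 1) :=
    fun t => Measure.restrict_apply' measurableSet_Icc
  -- finiteness
  have hfin : ∀ s : Set ℝ, s ⊆ Icc (0:ℝ) 1 → volume s ≠ ⊤ := by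
    intro s hs
    have : volume s ≤ volume (Icc (0:ℝ) 1) := measure_mono hs
    rw [Real.volume_Icc] at this
    exact (this.trans_lt ENNReal.ofReal_lt_top).ne
  have hAsubI : ∀ i, A i ⊆ Icc (0:ℝ) 1 := fun i => inter_subset_right
  have hBsubI : ∀ i, B i ⊆ Icc (0:ℝ) 1 := fun i => inter_subset_right
  -- down-closedness
  have hAdc : ∀ i, ∀ u ∈ Icc (0:ℝ) 1, ∀ v ∈ A i, u ≤ v → u ∈ A i := by
    intro i u hu v hv huv
    exact ⟨le_trans (hg i hu hv.2 huv) hv.1, hu⟩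
  have hBdc : ∀ i, ∀ u ∈ Icc (0:ℝ) 1, ∀ v ∈ B i, u ≤ v → u ∈ B i := by
    intro i u hu v hv huv
    exact ⟨lt_of_le_of_lt (hg i hu hv.2 huv) hv.1, hu⟩
  -- measurability via order-connectedness
  have hAoc : ∀ i, (A i).OrdConnected := by
    intro i
    constructor
    intro u hu v hv w hw
    have hwI : w ∈ Icc (0:ℝ) 1 := ⟨hu.2.1.trans hw.1, hw.2.trans hv.2.2⟩
    exact hAdc i w hwI v hv hw.2
  have hBoc : ∀ i, (B i).OrdConnected := by
    intro i
    constructor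
    intro u hu v hv w hw
    have hwI : w ∈ Icc (0:ℝ) 1 := ⟨hu.2.1.trans hw.1, hw.2.trans hv.2.2⟩
    exact hBdc i w hwI v hv hw.2
  have hEoc : E.OrdConnected := by
    constructor
    intro u hu v hv w hw
    have hwI : w ∈ Icc (0:ℝ) 1 := ⟨hu.2.1.trans hw.1, hw.2.trans hv.2.2⟩
    refine ⟨fun i => le_antisymm ?_ ?_, hwI⟩
    · exact (hg i hwI hv.2 hw.2).trans (le_of_eq (hv.1 i))
    · exact (le_of_eq (hu.1 i).symm).trans (hg i hu.2 hwI hw.1)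
  have hEm : MeasurableSet E := hEoc.measurableSet
  -- interval bounds
  have hBsub : ∀ i, B i ⊆ Icc 0 ((volume (B i)).toReal) := by
    intro i v hv
    refine ⟨hv.2.1, ?_⟩
    by_contra h
    push_neg at h
    have hsub : Icc (0:ℝ) v ⊆ B i := by
      intro w hw
      exact hBdc i w ⟨hw.1, hw.2.trans hv.2.2⟩ v hv hw.2
    have h1 : ENNReal.ofReal v ≤ volume (B i) := by
      have := measure_mono (μ := volume) hsub
      rwa [Real.volume_Icc, sub_zero] at this
    have h2 : v ≤ (volume (B i)).toReal := by
      have := ENNReal.toReal_mono (hfin _ (hBsubI i)) h1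
      rwa [ENNReal.toReal_ofReal hv.2.1] at this
    exact absurd h2 (not_le.mpr h)
  have hAsub : ∀ i, Ico 0 ((volume (A i)).toReal) ⊆ A i := by
    intro i u hu
    by_contra h
    have huI : u ∈ Icc (0:ℝ) 1 := by
      refine ⟨hu.1, hu.2.le.trans ?_⟩
      have : volume (A i) ≤ volume (Icc (0:ℝ) 1) := measure_mono (hAsubI i)
      have := ENNReal.toReal_mono (by simp [Real.volume_Icc]) this
      simpa [Real.volume_Icc] using this
    have hsub : A i ⊆ Icc 0 u := by
      intro v hv
      refine ⟨hv.2.1, ?_⟩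
      by_contra hvu
      push_neg at hvu
      exact h (hAdc i u huI v hv hvu.le)
    have h1 : volume (A i) ≤ ENNReal.ofReal u := by
      have := measure_mono (μ := volume) hsub
      rwa [Real.volume_Icc, sub_zero] at this
    have h2 : (volume (A i)).toReal ≤ u := by
      have := ENNReal.toReal_mono (by simp) h1
      rwa [ENNReal.toReal_ofReal hu.1] at this
    exact absurd h2 (not_le.mpr hu.2)
  -- rewrite goal
  simp only [hrw]
  show 0 < volume E ↔ (⨆ i, volume (B i)) < ⨅ i, volume (A i)
  constructor
  · intro hEpos
    obtain ⟨I, hI⟩ := exists_eq_ciInf_of_finite (f := fun i => volume (A i))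
    obtain ⟨J, hJ⟩ := exists_eq_ciSup_of_finite (f := fun i => volume (B i))
    rw [← hI, ← hJ]
    obtain ⟨u0, hu0⟩ : E.Nonempty := nonempty_of_measure_ne_zero hEpos.ne'
    have hdisj : Disjoint (B J) E := by
      rw [Set.disjoint_right]
      intro v hv hvB
      exact absurd (hv.1 J) (ne_of_lt hvB.1)
    have hsub : B J ∪ E ⊆ A I := by
      intro v hv
      have hu0A : u0 ∈ A I := ⟨le_of_eq (hu0.1 I), hu0.2⟩
      rcases hv with hv | hv
      · -- v ∈ B J ⇒ v ≤ u0
        have hvu : v ≤ u0 := by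
          by_contra hc
          push_neg at hc
          have : u0 ∈ B J := hBdc J u0 hu0.2 v hv hc.le
          exact absurd (hu0.1 J) (ne_of_lt this.1)
        exact hAdc I v hv.2 u0 hu0A hvu
      · exact ⟨le_of_eq (hv.1 I), hv.2⟩
    calc volume (B J) < volume (B J) + volume E :=
          ENNReal.lt_add_right (hfin _ (hBsubI J)) hEpos.ne'
      _ = volume (B J ∪ E) := (measure_union hdisj hEm).symm
      _ ≤ volume (A I) := measure_mono hsub
  · intro h
    obtain ⟨I, hI⟩ := exists_eq_ciInf_of_finite (f := fun i => volume (A i))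
    obtain ⟨J, hJ⟩ := exists_eq_ciSup_of_finite (f := fun i => volume (B i))
    set a : ℝ := (volume (A I)).toReal with ha
    set b : ℝ := (volume (B J)).toReal with hb
    have hBA : volume (B J) < volume (A I) := by
      rw [hI, hJ]; exact h
    have hba : b < a := ENNReal.toReal_strict_mono (hfin _ (hAsubI I)) hBA
    have hbi : ∀ i, (volume (B i)).toReal ≤ b := by
      intro i
      exact ENNReal.toReal_mono (hfin _ (hBsubI J)) (hJ ▸ le_iSup (fun i => volume (B i)) i)
    have hai : ∀ i, a ≤ (volume (A i)).toReal := by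
      intro i
      exact ENNReal.toReal_mono (hfin _ (hAsubI i)) (hI ▸ iInf_le (fun i => volume (A i)) i)
    have ha1 : a ≤ 1 := by
      have : volume (A I) ≤ volume (Icc (0:ℝ) 1) := measure_mono (hAsubI I)
      have := ENNReal.toReal_mono (by simp [Real.volume_Icc]) this
      simpa [Real.volume_Icc] using this
    have hb0 : 0 ≤ b := ENNReal.toReal_nonneg
    have hsub : Ioo b a ⊆ E := by
      intro u hu
      have hu0 : 0 < u := lt_of_le_of_lt hb0 hu.1
      have huI : u ∈ Icc (0:ℝ) 1 := ⟨hu0.le, hu.2.le.trans ha1⟩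
      refine ⟨fun i => ?_, huI⟩
      have hAi : u ∈ A i := hAsub i ⟨hu0.le, lt_of_lt_of_le hu.2 (hai i)⟩
      have hBi : u ∉ B i := by
        intro hc
        exact absurd ((hBsub i hc).2.trans (hbi i)) (not_le.mpr hu.1)
      exact le_antisymm hAi.1 (not_lt.mp (fun hc => hBi ⟨hc, huI⟩))
    calc (0:ENNReal) < ENNReal.ofReal (a - b) := by
          simp [ENNReal.ofReal_pos, sub_pos, hba]
      _ = volume (Ioo b a) := (Real.volume_Ioo).symm
      _ ≤ volume E := measure_mono hsub
end
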